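/- Let 0 ≤ k ≤ n and let ρ : [0:k] → [0:n] be strictly increasing with complement ρ^c (the strictly increasing map with image [0:n]∖[ρ]). Then dλ_ρ = Σ_{q ∈ [ρ^c]} ε(q,ρ) · φ_{ρ+q}, where φ denotes Whitney forms. -/

import Mathlib

open ExteriorAlgebra

set_option synthInstance.maxHeartbeats 1000000
set_option maxHeartbeats 1000000

noncomputable section

def invSign {m : ℕ} {α : Type*} [LinearOrder α] (f : Fin m → α) : ℤ :=
  (-1 : ℤ) ^ (Finset.univ.filter
    (fun p : Fin m × Fin m => p.1 < p.2 ∧ f p.2 < f p.1)).card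

def epsIns {n : ℕ} (q : Fin n) (s : Finset (Fin n)) : ℤ :=
  (-1 : ℤ) ^ (s.filter (fun x => x < q)).card

def epsApp {n : ℕ} (q : Fin n) (s : Finset (Fin n)) : ℤ :=
  (-1 : ℤ) ^ (s.filter (fun x => q < x)).card

def sortedOfFinset {n : ℕ} (s : Finset (Fin (n + 1))) (m : ℕ) : Fin m → Fin (n + 1) :=
  if h : s.card = m then fun i => (s.orderIsoOfFin h i : Fin (n + 1)) else fun _ => 0

variable {n : ℕ} {E : Type*} [AddCommGroup E] [Module ℝ E]

def dlam (b : AffineBasis (Fin (n + 1)) ℝ E) (i : Fin (n + 1)) : Module.Dual ℝ E :=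
  (b.coord i).linear

def dlamWedge (b : AffineBasis (Fin (n + 1)) ℝ E) {k : ℕ} (σ : Fin k → Fin (n + 1)) :
    ExteriorAlgebra ℝ (Module.Dual ℝ E) :=
  (List.ofFn fun i => ι ℝ (dlam b (σ i))).prod

def lamPow (b : AffineBasis (Fin (n + 1)) ℝ E) (α : Fin (n + 1) → ℕ) (x : E) : ℝ :=
  ∏ i, b.coord i x ^ α i

def whitneyForm (b : AffineBasis (Fin (n + 1)) ℝ E) {m : ℕ} (ρ : Fin m → Fin (n + 1)) (x : E) :
    ExteriorAlgebra ℝ (Module.Dual ℝ E) :=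
  ∑ j : Fin m,
    ((epsIns (ρ j) ((Finset.image ρ Finset.univ).erase (ρ j)) : ℝ) * b.coord (ρ j) x) •
      dlamWedge b (sortedOfFinset ((Finset.image ρ Finset.univ).erase (ρ j)) (m - 1))

lemma sortedOfFinset_image {m : ℕ} (f : Fin m → Fin (n+1)) (hf : StrictMono f) :
    sortedOfFinset (Finset.image f Finset.univ) m = f := by
  have hcard : (Finset.image f Finset.univ).card = m := by
    rw [Finset.card_image_of_injective _ hf.injective, Finset.card_univ, Fintype.card_fin]
  rw [sortedOfFinset, dif_pos hcard]
  funext i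
  rw [Finset.coe_orderIsoOfFin_apply,
    ← Finset.orderEmbOfFin_unique hcard
      (fun x => Finset.mem_image_of_mem f (Finset.mem_univ x)) hf]

lemma image_sortedOfFinset {s : Finset (Fin (n+1))} {m : ℕ} (h : s.card = m) :
    Finset.image (sortedOfFinset s m) Finset.univ = s := by
  rw [sortedOfFinset, dif_pos h]
  ext y
  simp only [Finset.mem_image, Finset.mem_univ, true_and, Finset.coe_orderIsoOfFin_apply]
  constructor
  · rintro ⟨i, rfl⟩; exact s.orderEmbOfFin_mem h i
  · intro hy
    have : y ∈ Set.range (s.orderEmbOfFin h) := by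
      rw [Finset.range_orderEmbOfFin]; exact hy
    obtain ⟨i, hi⟩ := this
    exact ⟨i, hi⟩

lemma card_filter_lt_orderEmb {s : Finset (Fin (n+1))} {m : ℕ} (h : s.card = m) (j : Fin m) :
    (s.filter (fun x => x < s.orderEmbOfFin h j)).card = j := by
  have heq : s.filter (fun x => x < s.orderEmbOfFin h j)
      = Finset.image (s.orderEmbOfFin h) (Finset.Iio j) := by
    ext y
    simp only [Finset.mem_filter, Finset.mem_image, Finset.mem_Iio]
    constructor
    · rintro ⟨hy, hlt⟩
      have : y ∈ Set.range (s.orderEmbOfFin h) := by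
        rw [Finset.range_orderEmbOfFin]; exact hy
      obtain ⟨i, rfl⟩ := this
      exact ⟨i, (s.orderEmbOfFin h).strictMono.lt_iff_lt.mp hlt, rfl⟩
    · rintro ⟨i, hij, rfl⟩
      exact ⟨s.orderEmbOfFin_mem h i, (s.orderEmbOfFin h).strictMono hij⟩
  rw [heq, Finset.card_image_of_injective _ (s.orderEmbOfFin h).injective, Fin.card_Iio]

lemma eq_of_card_filter_lt_eq {s : Finset (Fin (n+1))} {y y' : Fin (n+1)}
    (hy : y ∈ s) (hy' : y' ∈ s)
    (hc : (s.filter (fun x => x < y)).card = (s.filter (fun x => x < y')).card) : y = y' := by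
  by_contra hne
  wlog hlt : y < y' generalizing y y'
  · exact this hy' hy hc.symm (Ne.symm hne) ((Ne.lt_or_gt hne).resolve_left hlt)
  have h1 : s.filter (fun x => x < y) ⊆ s.filter (fun x => x < y') :=
    Finset.monotone_filter_right _ (fun x _ hx => lt_trans hx hlt)
  have h2 : y ∈ s.filter (fun x => x < y') := Finset.mem_filter.2 ⟨hy, hlt⟩
  have h3 : y ∉ s.filter (fun x => x < y) := fun hmem => lt_irrefl y (Finset.mem_filter.1 hmem).2
  have := Finset.card_lt_card ⟨h1, fun hsub => h3 (hsub h2)⟩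
  omega

lemma orderEmb_lt_iff {t : Finset (Fin (n+1))} {m : ℕ} (h : t.card = m) {e : Fin (n+1)}
    (he : e ∉ t) (j : Fin m) :
    t.orderEmbOfFin h j < e ↔ (j : ℕ) < (t.filter (fun x => x < e)).card := by
  constructor
  · intro hlt
    have h1 : t.filter (fun x => x < t.orderEmbOfFin h j) ⊆ t.filter (fun x => x < e) :=
      Finset.monotone_filter_right _ (fun x _ hx => lt_trans hx hlt)
    have h2 : t.orderEmbOfFin h j ∈ t.filter (fun x => x < e) :=
      Finset.mem_filter.2 ⟨t.orderEmbOfFin_mem h j, hlt⟩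
    have h3 : t.orderEmbOfFin h j ∉ t.filter (fun x => x < t.orderEmbOfFin h j) :=
      fun hmem => lt_irrefl _ (Finset.mem_filter.1 hmem).2
    have := Finset.card_lt_card ⟨h1, fun hsub => h3 (hsub h2)⟩
    rw [card_filter_lt_orderEmb h j] at this
    exact this
  · intro hlt
    by_contra hge
    push_neg at hge
    have hne : e ≠ t.orderEmbOfFin h j := fun hh => he (hh ▸ t.orderEmbOfFin_mem h j)
    have helt : e < t.orderEmbOfFin h j := lt_of_le_of_ne hge hne
    have h1 : t.filter (fun x => x < e) ⊆ t.filter (fun x => x < t.orderEmbOfFin h j) :=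
      Finset.monotone_filter_right _ (fun x _ hx => lt_trans hx helt)
    have := Finset.card_le_card h1
    rw [card_filter_lt_orderEmb h j] at this
    omega

lemma iota_mul_dlamWedge_eq_zero (b : AffineBasis (Fin (n + 1)) ℝ E) {m : ℕ}
    {t : Finset (Fin (n+1))} (h : t.card = m) {q : Fin (n+1)} (hq : q ∈ t) :
    ι ℝ (dlam b q) * dlamWedge b (sortedOfFinset t m) = 0 := by
  obtain ⟨j, hj⟩ : ∃ j : Fin m, t.orderEmbOfFin h j = q := by
    have : q ∈ Set.range (t.orderEmbOfFin h) := by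
      rw [Finset.range_orderEmbOfFin]; exact hq
    exact this
  rw [dlamWedge, sortedOfFinset, dif_pos h]
  simp only [Finset.coe_orderIsoOfFin_apply]
  have := ExteriorAlgebra.ι_mul_prod_list (R := ℝ)
    (fun i : Fin m => dlam b (t.orderEmbOfFin h i)) j
  simpa [hj] using this

lemma dlamWedge_extract (b : AffineBasis (Fin (n + 1)) ℝ E) {m : ℕ}
    {s : Finset (Fin (n+1))} (h : s.card = m + 1) {e : Fin (n+1)} (he : e ∈ s) :
    dlamWedge b (sortedOfFinset s (m+1)) =
      ((epsIns e (s.erase e) : ℤ) : ℝ) •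
        (ι ℝ (dlam b e) * dlamWedge b (sortedOfFinset (s.erase e) m)) := by
  classical
  set t := s.erase e with ht_def
  have ht : t.card = m := by simp [ht_def, Finset.card_erase_of_mem he, h]
  have he' : e ∉ t := Finset.notMem_erase e s
  have hse : s = insert e t := (Finset.insert_erase he).symm
  set u : Fin m → Fin (n+1) := fun j => t.orderEmbOfFin ht j with hu
  set r : ℕ := (t.filter (fun x => x < e)).card with hr_def
  have hrm : r ≤ m := le_trans (Finset.card_filter_le _ _) (le_of_eq ht)
  set R : Fin (m+1) := ⟨r, Nat.lt_succ_of_le hrm⟩ with hR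
  set w : Fin (m+1) → Fin (n+1) := Fin.cons e u with hw_def
  -- evaluate w at nonzero index
  have hw : ∀ (j : Fin (m+1)) (hj : j ≠ 0), w j = u (j.pred hj) := by
    intro j hj
    conv_lhs => rw [← Fin.succ_pred j hj]
    exact Fin.cons_succ _ _ _
  -- the key: sortedOfFinset s = w ∘ cycleRange R
  have hsort : sortedOfFinset s (m+1) = w ∘ (Fin.cycleRange R) := by
    funext i
    rw [sortedOfFinset, dif_pos h]
    simp only [Finset.coe_orderIsoOfFin_apply, Function.comp_apply]
    -- compute value and its filter-count
    have hmem : w (Fin.cycleRange R i) ∈ s ∧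
        (s.filter (fun x => x < w (Fin.cycleRange R i))).card = (i : ℕ) := by
      rcases lt_trichotomy i R with hiR | hiR | hiR
      · -- i < R : value is u ⟨i, _⟩
        have hcy : ((Fin.cycleRange R i : Fin (m+1)) : ℕ) = (i : ℕ) + 1 := by
          rw [Fin.coe_cycleRange_of_le (le_of_lt hiR), if_neg (ne_of_lt hiR)]
        have hne0 : Fin.cycleRange R i ≠ 0 := by
          intro hh; rw [hh] at hcy; simp at hcy
        have hiltm : (i : ℕ) < m := lt_of_lt_of_le (by exact_mod_cast hiR) hrm
        have hval : w (Fin.cycleRange R i) = u ⟨(i : ℕ), hiltm⟩ := by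
          rw [hw _ hne0]
          congr 1
          apply Fin.ext
          simp [Fin.coe_pred, hcy]
        have hylt : u ⟨(i : ℕ), hiltm⟩ < e := by
          rw [hu]
          rw [orderEmb_lt_iff ht he' ⟨(i : ℕ), hiltm⟩]
          exact_mod_cast hiR
        refine ⟨?_, ?_⟩
        · rw [hval, hse]
          exact Finset.mem_insert_of_mem (t.orderEmbOfFin_mem ht _)
        · rw [hval, hse, Finset.filter_insert, if_neg (by exact not_lt_of_gt hylt)]
          exact card_filter_lt_orderEmb ht _
      · -- i = R : value is e
        have hval : w (Fin.cycleRange R i) = e := by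
          rw [hiR, Fin.cycleRange_self]
          exact Fin.cons_zero _ _
        refine ⟨by rw [hval]; exact he, ?_⟩
        rw [hval, hse, Finset.filter_insert, if_neg (lt_irrefl e), hiR]
      · -- i > R : value is u ⟨i-1, _⟩
        have hcy : Fin.cycleRange R i = i := Fin.cycleRange_of_gt hiR
        have hi0 : (0:ℕ) < (i:ℕ) := lt_of_le_of_lt (Nat.zero_le r) (by exact_mod_cast hiR)
        have hne0 : Fin.cycleRange R i ≠ 0 := by
          rw [hcy]; intro hh; rw [hh] at hi0; simp at hi0
        have him : (i : ℕ) - 1 < m := by have := i.isLt; omega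
        have hval : w (Fin.cycleRange R i) = u ⟨(i : ℕ) - 1, him⟩ := by
          rw [hw _ hne0]
          congr 1
          apply Fin.ext
          simp [Fin.coe_pred, hcy]
        have hyge : ¬ (u ⟨(i : ℕ) - 1, him⟩ < e) := by
          rw [hu, orderEmb_lt_iff ht he' ⟨(i : ℕ) - 1, him⟩]
          simp only [← hr_def]
          have : r < (i : ℕ) := by exact_mod_cast hiR
          omega
        have hyne : e ≠ u ⟨(i : ℕ) - 1, him⟩ :=
          fun hh => he' (hh ▸ t.orderEmbOfFin_mem ht _)
        have hygt : e < u ⟨(i : ℕ) - 1, him⟩ :=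
          lt_of_le_of_ne (not_lt.mp hyge) hyne
        refine ⟨?_, ?_⟩
        · rw [hval, hse]
          exact Finset.mem_insert_of_mem (t.orderEmbOfFin_mem ht _)
        · rw [hval, hse, Finset.filter_insert, if_pos hygt,
            Finset.card_insert_of_notMem (fun hx => he' (Finset.mem_of_mem_filter _ hx)),
            card_filter_lt_orderEmb ht _]
          have : r < (i : ℕ) := by exact_mod_cast hiR
          simp only [Fin.val_mk]
          omega
    -- conclude by uniqueness of index
    apply eq_of_card_filter_lt_eq (s.orderEmbOfFin_mem h i) hmem.1
    rw [hmem.2, card_filter_lt_orderEmb h i]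
  -- now the algebra
  rw [hsort, dlamWedge]
  have h1 : (List.ofFn fun i => ι ℝ (dlam b ((w ∘ Fin.cycleRange R) i))).prod
      = ιMulti ℝ (m+1) ((fun i => dlam b (w i)) ∘ (Fin.cycleRange R)) :=
    (ιMulti_apply _).symm
  have h2 : ιMulti ℝ (m+1) (fun i => dlam b (w i))
      = ι ℝ (dlam b e) * dlamWedge b (sortedOfFinset t m) := by
    rw [ιMulti_apply, dlamWedge, List.ofFn_succ]
    simp only [hw_def, Fin.cons_zero, Fin.cons_succ, List.prod_cons]
    rw [sortedOfFinset, dif_pos ht]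
    simp only [Finset.coe_orderIsoOfFin_apply]
    rfl
  rw [h1, AlternatingMap.map_perm, Fin.sign_cycleRange, h2]
  have heps : epsIns e t = (-1:ℤ)^r := rfl
  rw [heps]
  have hRr : ((R : Fin (m+1)) : ℕ) = r := rfl
  rw [hRr, Units.smul_def]
  rw [show (((-1:ℤˣ)^r : ℤˣ) : ℤ) = (-1:ℤ)^r by norm_cast]
  rw [Int.cast_smul_eq_zsmul]

lemma sum_dlam (b : AffineBasis (Fin (n + 1)) ℝ E) : ∑ i, dlam b i = 0 := by
  ext v
  have key : ∀ i : Fin (n+1), dlam b i v = b.coord i (v +ᵥ b 0) - b.coord i (b 0) := by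
    intro i
    have h := (b.coord i).map_vadd (b 0) v
    rw [h, vadd_eq_add, dlam]
    ring
  simp only [LinearMap.coe_sum, Finset.sum_apply, LinearMap.zero_apply]
  calc ∑ i, dlam b i v = ∑ i, (b.coord i (v +ᵥ b 0) - b.coord i (b 0)) :=
        Finset.sum_congr rfl (fun i _ => key i)
    _ = 0 := by
        rw [Finset.sum_sub_distrib, b.sum_coord_apply_eq_one, b.sum_coord_apply_eq_one,
          sub_self]

lemma epsIns_mul_self (q : Fin (n+1)) (s : Finset (Fin (n+1))) :
    (epsIns q s) * (epsIns q s) = 1 := by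
  rw [epsIns, ← pow_add]
  exact Even.neg_one_pow ⟨_, rfl⟩

lemma epsIns_sign {p q : Fin (n+1)} {t : Finset (Fin (n+1))} (hp : p ∉ t) (hq : q ∉ t)
    (hpq : p ≠ q) :
    (epsIns q (insert p t)) * (epsIns p (insert q t)) * (epsIns q t) = - epsIns p t := by
  have hsq : ∀ a : ℕ, ((-1:ℤ))^a * (-1)^a = 1 := by
    intro a; rw [← pow_add]; exact Even.neg_one_pow ⟨a, rfl⟩
  rw [epsIns, epsIns, epsIns, epsIns, Finset.filter_insert, Finset.filter_insert]
  rcases hpq.lt_or_gt with h | h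
  · rw [if_pos h, if_neg (asymm h),
      Finset.card_insert_of_notMem (fun hx => hp (Finset.mem_of_mem_filter _ hx))]
    calc ((-1:ℤ))^((Finset.filter (fun x => x < q) t).card + 1)
            * (-1)^(Finset.filter (fun x => x < p) t).card
            * (-1)^(Finset.filter (fun x => x < q) t).card
        = ((-1:ℤ))^(Finset.filter (fun x => x < q) t).card
            * (-1)^(Finset.filter (fun x => x < q) t).card
            * (-((-1:ℤ))^(Finset.filter (fun x => x < p) t).card) := by
          rw [pow_succ]; ring
      _ = - ((-1:ℤ))^(Finset.filter (fun x => x < p) t).card := by rw [hsq]; ring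
  · rw [if_neg (asymm h), if_pos h,
      Finset.card_insert_of_notMem (fun hx => hq (Finset.mem_of_mem_filter _ hx))]
    calc ((-1:ℤ))^(Finset.filter (fun x => x < q) t).card
            * (-1)^((Finset.filter (fun x => x < p) t).card + 1)
            * (-1)^(Finset.filter (fun x => x < q) t).card
        = ((-1:ℤ))^(Finset.filter (fun x => x < q) t).card
            * (-1)^(Finset.filter (fun x => x < q) t).card
            * (-((-1:ℤ))^(Finset.filter (fun x => x < p) t).card) := by
          rw [pow_succ]; ring
      _ = - ((-1:ℤ))^(Finset.filter (fun x => x < p) t).card := by rw [hsq]; ring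

/-- Let `0 ≤ k ≤ n` and let `ρ : [0:k] → [0:n]` be strictly increasing with complement
`ρ^c` (image `[0:n] ∖ [ρ]`).  Then `dλ_ρ = Σ_{q ∈ [ρ^c]} ε(q,ρ) · φ_{ρ+q}`, where `φ`
denotes Whitney forms, `ρ+q` is the strictly increasing map with image `[ρ] ∪ {q}`, and
`ε(q,ρ)` is the sign of the permutation ordering `(q, ρ(0), …, ρ(k))`. -/
theorem dlamWedge_eq_sum_whitney {n : ℕ} {E : Type*} [AddCommGroup E] [Module ℝ E]
    (b : AffineBasis (Fin (n + 1)) ℝ E) {k : ℕ} (hk : k ≤ n)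
    (ρ : Fin (k + 1) → Fin (n + 1)) (hρ : StrictMono ρ) :
    ∀ x : E,
      dlamWedge b ρ =
        ∑ q ∈ (Finset.image ρ Finset.univ)ᶜ,
          epsIns q (Finset.image ρ Finset.univ) •
            whitneyForm b (sortedOfFinset (insert q (Finset.image ρ Finset.univ)) (k + 2)) x := by
  intro x
  classical
  set Sρ := Finset.image ρ Finset.univ with hSρ
  have hcard : Sρ.card = k + 1 := by
    rw [hSρ, Finset.card_image_of_injective _ hρ.injective, Finset.card_univ, Fintype.card_fin]
  -- Step 1: rewrite each Whitney form as a sum over the finset `insert q Sρ`.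
  have hterm : ∀ q, q ∉ Sρ →
      whitneyForm b (sortedOfFinset (insert q Sρ) (k+2)) x
        = ∑ p ∈ insert q Sρ, ((epsIns p ((insert q Sρ).erase p) : ℝ) * b.coord p x) •
            dlamWedge b (sortedOfFinset ((insert q Sρ).erase p) (k+1)) := by
    intro q hq'
    have hcard2 : (insert q Sρ).card = k + 2 := by
      rw [Finset.card_insert_of_notMem hq', hcard]
    have himg : Finset.image (sortedOfFinset (insert q Sρ) (k+2)) Finset.univ = insert q Sρ :=
      image_sortedOfFinset hcard2
    have hinj : ∀ a ∈ (Finset.univ : Finset (Fin (k+2))), ∀ b' ∈ (Finset.univ : Finset (Fin (k+2))),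
        sortedOfFinset (insert q Sρ) (k+2) a = sortedOfFinset (insert q Sρ) (k+2) b' → a = b' := by
      intro a _ b' _ hab
      have hinj' : Function.Injective (sortedOfFinset (insert q Sρ) (k+2)) := by
        rw [sortedOfFinset, dif_pos hcard2]
        intro a b hab
        exact ((insert q Sρ).orderIsoOfFin hcard2).injective (Subtype.ext hab)
      exact hinj' hab
    rw [whitneyForm]
    conv_rhs => rw [← himg, Finset.sum_image hinj]
    simp only [himg]
    have h21 : k + 2 - 1 = k + 1 := rfl
    rw [h21]
  -- Step 2: each summand of the RHS
  have main : ∀ q ∈ Sρᶜ,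
      epsIns q Sρ • whitneyForm b (sortedOfFinset (insert q Sρ) (k+2)) x
        = (b.coord q x) • dlamWedge b (sortedOfFinset Sρ (k+1)) +
          ∑ p ∈ Sρ, (((-(epsIns p (Sρ.erase p)) : ℤ) : ℝ) * b.coord p x) •
            (ι ℝ (dlam b q) * dlamWedge b (sortedOfFinset (Sρ.erase p) k)) := by
    intro q hq
    have hq' : q ∉ Sρ := Finset.mem_compl.mp hq
    rw [hterm q hq', Finset.sum_insert hq', Finset.erase_insert hq']
    rw [smul_add, Finset.smul_sum]
    congr 1
    · -- the p = q term
      rw [← Int.cast_smul_eq_zsmul ℝ, smul_smul, ← mul_assoc, ← Int.cast_mul,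
        epsIns_mul_self, Int.cast_one, one_mul]
    · -- the p ∈ Sρ terms
      apply Finset.sum_congr rfl
      intro p hp
      have hqp : q ≠ p := fun h => hq' (h ▸ hp)
      have hpt : p ∉ Sρ.erase p := Finset.notMem_erase p Sρ
      have hqt : q ∉ Sρ.erase p := fun h => hq' (Finset.mem_of_mem_erase h)
      have herase : (insert q Sρ).erase p = insert q (Sρ.erase p) :=
        Finset.erase_insert_of_ne hqp
      have htcard : (Sρ.erase p).card = k := by
        rw [Finset.card_erase_of_mem hp, hcard]
        rfl
      have hicard : (insert q (Sρ.erase p)).card = k + 1 := by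
        rw [Finset.card_insert_of_notMem hqt, htcard]
      have hext := dlamWedge_extract b (m := k) hicard (Finset.mem_insert_self q (Sρ.erase p))
      rw [Finset.erase_insert hqt] at hext
      rw [herase, hext]
      rw [← Int.cast_smul_eq_zsmul ℝ, smul_smul, smul_smul]
      congr 1
      have hs := epsIns_sign hpt hqt (Ne.symm hqp)
      rw [Finset.insert_erase hp] at hs
      push_cast [← hs]
      ring
  -- Step 3: the inner sum over q for fixed p
  have inner : ∀ p ∈ Sρ,
      ∑ q ∈ Sρᶜ, (((-(epsIns p (Sρ.erase p)) : ℤ) : ℝ) * b.coord p x) •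
          (ι ℝ (dlam b q) * dlamWedge b (sortedOfFinset (Sρ.erase p) k))
        = (b.coord p x) • dlamWedge b (sortedOfFinset Sρ (k+1)) := by
    intro p hp
    have hpt : p ∉ Sρ.erase p := Finset.notMem_erase p Sρ
    have htcard : (Sρ.erase p).card = k := by
      rw [Finset.card_erase_of_mem hp, hcard]
      rfl
    rw [← Finset.smul_sum]
    have hsum : ∑ q ∈ Sρᶜ, ι ℝ (dlam b q) * dlamWedge b (sortedOfFinset (Sρ.erase p) k)
        = - (ι ℝ (dlam b p) * dlamWedge b (sortedOfFinset (Sρ.erase p) k)) := by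
      have h0 : ∑ q ∈ Sρ, ι ℝ (dlam b q) * dlamWedge b (sortedOfFinset (Sρ.erase p) k)
          + ∑ q ∈ Sρᶜ, ι ℝ (dlam b q) * dlamWedge b (sortedOfFinset (Sρ.erase p) k) = 0 := by
        rw [Finset.sum_add_sum_compl]
        rw [← Finset.sum_mul, ← map_sum, sum_dlam]
        simp
      have h1 : ∑ q ∈ Sρ, ι ℝ (dlam b q) * dlamWedge b (sortedOfFinset (Sρ.erase p) k)
          = ι ℝ (dlam b p) * dlamWedge b (sortedOfFinset (Sρ.erase p) k) := by
        rw [← Finset.add_sum_erase _ _ hp]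
        have hz : ∑ q ∈ Sρ.erase p, ι ℝ (dlam b q) * dlamWedge b (sortedOfFinset (Sρ.erase p) k) = 0 :=
          Finset.sum_eq_zero (fun q hq => iota_mul_dlamWedge_eq_zero b htcard hq)
        rw [hz, add_zero]
      rw [h1] at h0
      exact eq_neg_of_add_eq_zero_right h0
    rw [hsum]
    have hext := dlamWedge_extract b (m := k) hcard hp
    rw [hext, smul_neg, smul_smul, ← neg_smul]
    congr 1
    push_cast
    ring
  -- Step 4: assemble
  have hL : dlamWedge b ρ = dlamWedge b (sortedOfFinset Sρ (k+1)) := by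
    rw [hSρ, sortedOfFinset_image ρ hρ]
  rw [hL, Finset.sum_congr rfl main, Finset.sum_add_distrib, ← Finset.sum_smul,
    Finset.sum_comm, Finset.sum_congr rfl inner, ← Finset.sum_smul, ← add_smul]
  have hone : (∑ q ∈ Sρᶜ, b.coord q x) + ∑ p ∈ Sρ, b.coord p x = 1 := by
    rw [add_comm, Finset.sum_add_sum_compl, b.sum_coord_apply_eq_one]
  rw [hone, one_smul]
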